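/- arXiv:1704.00328 — 3 statements merged into one kernel-verified Lean document; each statement's English description precedes it below -/
import Mathlib

section
/- For λ = 6 and any r with 0 < r ≤ 0.338, the function v(x) = √(1+λ)·cos(√λ·x) is a nonnegative supersolution on (-r, r): it satisfies (1/2)v'' + (1/2)v³ + (1/2)v - v ≤ 0 on (-r, r), v ≥ 0 on [-r, r], and v(x) ≥ (√2/cosh(x))² = 2/cosh²(x) at x = ±r. -/
/-!
Since `v'' = -6 v`, the left-hand side of the differential inequality equals `v (v² - 7) / 2`,
which is nonpositive as long as `0 ≤ v`, i.e. `cos (√6 x) ≥ 0`; this holds because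
`(√6 x)² ≤ 2`. The boundary inequality `2 ≤ √7 cos (√6 r) cosh² r` is tight (the margin is below
`2 · 10⁻³` at `r = 0.338`), so it needs the Taylor bounds `cos t ≥ 1 - t²/2 + t⁴/24 - t⁶/720`
(alternating series) and `cosh r ≥ 1 + r²/2 + r⁴/24` (series with nonnegative terms), after which
it is a polynomial inequality in `r²`.
-/

open Real Finset Nat

theorem deriv_deriv_const_mul_cos (a b : ℝ) :
    deriv (deriv fun x => a * cos (b * x)) = fun x => -b ^ 2 * (a * cos (b * x)) := by
  have hlin (x : ℝ) : HasDerivAt (fun x => b * x) b x := by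
    simpa using (hasDerivAt_id x).const_mul b
  have hderiv : deriv (fun x => a * cos (b * x)) = fun x => -(a * b) * sin (b * x) :=
    funext fun x => ((hlin x).cos.const_mul a).deriv.trans (by ring)
  funext x
  rw [hderiv]
  exact ((hlin x).sin.const_mul _).deriv.trans (by ring)

theorem half_mul_neg_mul_add_cube_sub_le_zero {b v : ℝ} (hv : 0 ≤ v) (hv2 : v ^ 2 ≤ 1 + b ^ 2) :
    (1 / 2) * (-b ^ 2 * v) + (1 / 2) * v ^ 3 + (1 / 2) * v - v ≤ 0 := by
  nlinarith [mul_nonneg hv (sub_nonneg.2 hv2)]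

theorem cos_nonneg_of_sq_le_two {t : ℝ} (ht : t ^ 2 ≤ 2) : 0 ≤ cos t := by
  linarith [one_sub_sq_div_two_le_cos (x := t)]

theorem taylor_sextic_le_cos {t : ℝ} (ht : t ^ 2 ≤ 2) :
    1 - t ^ 2 / 2 + t ^ 4 / 24 - t ^ 6 / 720 ≤ cos t := by
  set f : ℕ → ℝ := fun n => t ^ (2 * n) / (2 * n)!
  have hfl : Filter.Tendsto (fun n => ∑ i ∈ range n, (-1) ^ i * f i) Filter.atTop
      (nhds (cos t)) := by
    simpa only [f, mul_div_assoc] using (hasSum_cos t).tendsto_sum_nat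
  have hfa : Antitone f := by
    refine antitone_nat_of_succ_le fun n => ?_
    have hfac : ((2 * (n + 1))! : ℝ) = (2 * n)! * ((2 * n + 1) * (2 * n + 2)) := by
      rw [show 2 * (n + 1) = 2 * n + 1 + 1 by ring, Nat.factorial_succ, Nat.factorial_succ]
      push_cast
      ring
    have hratio : t ^ 2 / ((2 * n + 1) * (2 * n + 2)) ≤ 1 := by
      rw [div_le_one (by positivity)]
      nlinarith [(n.cast_nonneg : (0 : ℝ) ≤ n)]
    calc f (n + 1) = f n * (t ^ 2 / ((2 * n + 1) * (2 * n + 2))) := by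
          simp only [f]
          rw [hfac, mul_add, pow_add]
          field_simp
      _ ≤ f n := mul_le_of_le_one_right (by simp only [f]; rw [pow_mul]; positivity) hratio
  refine Eq.trans_le ?_ (hfa.alternating_series_le_tendsto hfl 2)
  norm_num [f, sum_range_succ, Nat.factorial]
  ring

theorem taylor_quartic_le_cosh (r : ℝ) : 1 + r ^ 2 / 2 + r ^ 4 / 24 ≤ cosh r := by
  refine Eq.trans_le ?_ (sum_le_hasSum (range 3) (fun n _ => by rw [pow_mul]; positivity)
    (hasSum_cosh r))
  norm_num [sum_range_succ, Nat.factorial]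

-- The two Taylor polynomials evaluated at `(√6 r)² = 6u` and `r² = u`; note `2 / √7 < 0.7561`.
theorem le_cos_taylor_mul_cosh_taylor_sq {u : ℝ} (hu0 : 0 ≤ u) (hu : u ≤ 0.338 ^ 2) :
    0.7561 ≤ (1 - 3 * u + 3 / 2 * u ^ 2 - 3 / 10 * u ^ 3) * (1 + u / 2 + u ^ 2 / 24) ^ 2 := by
  have h : 0 ≤ 0.114244 - u := by norm_num at hu ⊢; linarith
  nlinarith [mul_nonneg h hu0, mul_nonneg h (pow_nonneg hu0 2), mul_nonneg h (pow_nonneg hu0 3),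
    mul_nonneg h (pow_nonneg hu0 4), mul_nonneg h (pow_nonneg hu0 5), mul_nonneg h (pow_nonneg hu0 6)]

theorem sq_sqrt_six_mul_le_two {x : ℝ} (hx : |x| ≤ 0.338) : (√6 * x) ^ 2 ≤ 2 := by
  rw [mul_pow, sq_sqrt (by norm_num)]
  nlinarith [sq_le_sq' (abs_le.1 hx).1 (abs_le.1 hx).2]

theorem two_div_cosh_sq_le_sqrt_seven_mul_cos {r : ℝ} (hr : |r| ≤ 0.338) :
    2 / cosh r ^ 2 ≤ √7 * cos (√6 * r) := by
  have ht := sq_sqrt_six_mul_le_two hr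
  have hcos : 1 - 3 * r ^ 2 + 3 / 2 * (r ^ 2) ^ 2 - 3 / 10 * (r ^ 2) ^ 3 ≤ cos (√6 * r) := by
    have := taylor_sextic_le_cos ht
    rw [show (√6 * r) ^ 4 = ((√6 * r) ^ 2) ^ 2 by ring, show (√6 * r) ^ 6 = ((√6 * r) ^ 2) ^ 3 by
      ring, mul_pow, sq_sqrt (by norm_num)] at this
    linarith
  have hsqrt7 : (2.6453 : ℝ) ≤ √7 := by rw [le_sqrt (by norm_num) (by norm_num)]; norm_num
  rw [div_le_iff₀ (by positivity)]
  calc (2 : ℝ) ≤ √7 * 0.7561 := by linarith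
    _ ≤ √7 * ((1 - 3 * r ^ 2 + 3 / 2 * (r ^ 2) ^ 2 - 3 / 10 * (r ^ 2) ^ 3) *
          (1 + r ^ 2 / 2 + (r ^ 2) ^ 2 / 24) ^ 2) := by
      gcongr
      exact le_cos_taylor_mul_cosh_taylor_sq (sq_nonneg r)
        (sq_le_sq' (abs_le.1 hr).1 (abs_le.1 hr).2)
    _ ≤ √7 * (cos (√6 * r) * cosh r ^ 2) := by
      gcongr
      · exact cos_nonneg_of_sq_le_two ht
      · linarith [taylor_quartic_le_cosh r, show (r ^ 2) ^ 2 = r ^ 4 by ring]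
    _ = √7 * cos (√6 * r) * cosh r ^ 2 := by ring

theorem stmt3 (r : ℝ) (hr : 0 < r) (hr' : r ≤ 0.338) (v : ℝ → ℝ)
    (hv : ∀ x, v x = Real.sqrt 7 * Real.cos (Real.sqrt 6 * x)) :
    (∀ x ∈ Set.Ioo (-r) r,
      (1 / 2) * deriv (deriv v) x + (1 / 2) * v x ^ 3 + (1 / 2) * v x - v x ≤ 0) ∧
    (∀ x : ℝ, |x| ≤ r → 0 ≤ v x) ∧
    2 / Real.cosh r ^ 2 ≤ v r ∧ 2 / Real.cosh (-r) ^ 2 ≤ v (-r) := by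
  obtain rfl : v = fun x => √7 * cos (√6 * x) := funext hv
  have hv_nonneg (x : ℝ) (hx : |x| ≤ r) : 0 ≤ √7 * cos (√6 * x) :=
    mul_nonneg (sqrt_nonneg 7) (cos_nonneg_of_sq_le_two (sq_sqrt_six_mul_le_two (hx.trans hr')))
  have hboundary := two_div_cosh_sq_le_sqrt_seven_mul_cos (abs_le.2 ⟨by linarith, hr'⟩)
  refine ⟨fun x hx => ?_, hv_nonneg, hboundary, by simpa using hboundary⟩
  rw [deriv_deriv_const_mul_cos]
  refine half_mul_neg_mul_add_cube_sub_le_zero (hv_nonneg x (abs_le.2 ⟨hx.1.le, hx.2.le⟩)) ?_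
  rw [mul_pow, sq_sqrt (by norm_num), sq_sqrt (by norm_num)]
  linarith [cos_sq_le_one (√6 * x)]
end

section
/- For β, r > 0 and the Green function G(x,y) = (-2/√(2β))·(sinh(√(2β)(x-y)⁺) - (sinh(√(2β)(r+x))/sinh(2√(2β)r))·sinh(√(2β)(r-y))), the logarithmic derivative identity ∂ₓG(x,y)/G(x,y) = √(2β)/tanh(√(2β)(x+r)) holds when -r < x < y < r, and ∂ₓG(x,y)/G(x,y) = √(2β)/tanh(√(2β)(x-r)) holds when -r < y < x < r (assuming G(x,y) ≠ 0). -/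
/-!
Write `k = √(2β)`. On either side of the diagonal `G(·, y)` is a constant multiple of a single
`sinh`: for `x < y` the `(x - y)⁺` term vanishes and `G(x, y) ∝ sinh (k (x + r))`, while for
`x > y` the product-to-sum formulas collapse the two terms into `G(x, y) ∝ sinh (k (x - r))`.
The logarithmic derivative of `A sinh (k (x + c))` is `k / tanh (k (x + c))`.
-/

open Real Filter Topology

noncomputable def greenFunction (k r x y : ℝ) : ℝ :=
  (-2 / k) * (sinh (k * max (x - y) 0) -
    sinh (k * (r + x)) / sinh (2 * k * r) * sinh (k * (r - y)))

theorem sinh_sub_mul_sinh_two_mul_sub_sinh_add_mul_sinh_sub (a b w : ℝ) :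
    sinh (a - b) * sinh (2 * w) - sinh (w + a) * sinh (w - b) = sinh (a - w) * sinh (b + w) := by
  simp only [sinh_add, sinh_sub, sinh_two_mul]
  ring

section greenFunction

variable {k r z y : ℝ}

theorem greenFunction_of_le (hzy : z ≤ y) :
    greenFunction k r z y =
      2 / k * (sinh (k * (r - y)) / sinh (2 * k * r)) * sinh (k * (z + r)) := by
  rw [greenFunction, max_eq_right (sub_nonpos.2 hzy), mul_zero, sinh_zero, add_comm z]
  ring

theorem greenFunction_of_ge (hkr : sinh (2 * k * r) ≠ 0) (hyz : y ≤ z) :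
    greenFunction k r z y =
      -2 / k * (sinh (k * (y + r)) / sinh (2 * k * r)) * sinh (k * (z - r)) := by
  have key : sinh (k * (z - y)) * sinh (2 * k * r) - sinh (k * (r + z)) * sinh (k * (r - y)) =
      sinh (k * (z - r)) * sinh (k * (y + r)) := by
    convert sinh_sub_mul_sinh_two_mul_sub_sinh_add_mul_sinh_sub (k * z) (k * y) (k * r) using 4 <;>
      ring
  rw [greenFunction, max_eq_left (sub_nonneg.2 hyz), mul_assoc (-2 / k)]
  congr 1
  rw [div_mul_eq_mul_div, div_mul_eq_mul_div, sub_div' hkr, mul_comm (sinh (k * (y + r))), key]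

end greenFunction

theorem deriv_div_eq_div_tanh_of_eventuallyEq {f : ℝ → ℝ} {A k c x : ℝ}
    (hf : f =ᶠ[𝓝 x] fun z => A * sinh (k * (z + c))) (hfx : f x ≠ 0) :
    deriv f x / f x = k / tanh (k * (x + c)) := by
  have hd : HasDerivAt (fun z => A * sinh (k * (z + c))) (A * (cosh (k * (x + c)) * k)) x := by
    simpa using (((hasDerivAt_id x).add_const c).const_mul k).sinh.const_mul A
  rw [hf.eq_of_nhds] at hfx
  have hA : A ≠ 0 := left_ne_zero_of_mul hfx
  have hs : sinh (k * (x + c)) ≠ 0 := right_ne_zero_of_mul hfx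
  rw [hf.deriv_eq, hd.deriv, hf.eq_of_nhds, tanh_eq_sinh_div_cosh]
  field_simp

theorem stmt7 (β r : ℝ) (hβ : 0 < β) (hr : 0 < r)
    (G : ℝ → ℝ → ℝ)
    (hG : ∀ x y, G x y = (-2 / Real.sqrt (2 * β)) *
      (Real.sinh (Real.sqrt (2 * β) * max (x - y) 0) -
        Real.sinh (Real.sqrt (2 * β) * (r + x)) / Real.sinh (2 * Real.sqrt (2 * β) * r) *
          Real.sinh (Real.sqrt (2 * β) * (r - y)))) :
    ∀ x y : ℝ, -r < x → x < r → -r < y → y < r → G x y ≠ 0 →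
      (x < y → deriv (fun z => G z y) x / G x y
        = Real.sqrt (2 * β) / Real.tanh (Real.sqrt (2 * β) * (x + r))) ∧
      (y < x → deriv (fun z => G z y) x / G x y
        = Real.sqrt (2 * β) / Real.tanh (Real.sqrt (2 * β) * (x - r))) := by
  obtain rfl : G = greenFunction √(2 * β) r := funext fun x => funext (hG x)
  intro x y _ _ _ _ hG0
  have hkr : sinh (2 * √(2 * β) * r) ≠ 0 := (sinh_pos_iff.2 (by positivity)).ne'
  refine ⟨fun hxy => ?_, fun hyx => ?_⟩
  · exact deriv_div_eq_div_tanh_of_eventuallyEq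
      (by filter_upwards [Iio_mem_nhds hxy] with z hz using greenFunction_of_le hz.le) hG0
  · rw [sub_eq_add_neg]
    exact deriv_div_eq_div_tanh_of_eventuallyEq (by
      filter_upwards [Ioi_mem_nhds hyx] with z hz
      rw [greenFunction_of_ge hkr hz.le, sub_eq_add_neg]) hG0
end

section
/- Let f(s) = ∑_{l∈L} p_l s^l be a probability generating function with p_0 > 0 and f not affine (some p_l > 0 for l ≥ 2). Then the map s ↦ f(s)/(s·f'(s)) is strictly decreasing on the interval where s > 0, f'(s) > 0, and s is within the radius of convergence. -/
/-!
With `M s = s f'(s) = ∑ l p_l s^l`, the claim is `f s₂ * M s₁ < f s₁ * M s₂`. Expanding both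
products as double series and symmetrising in the two indices, the difference becomes
`∑_{l,m} p_l p_m (l - m) (s₂^l s₁^m - s₂^m s₁^l) / 2`, a series of nonnegative terms (Chebyshev's
sum inequality) whose `(k, 0)` term is positive as soon as `p 0 > 0` and `p k > 0` for some `k ≠ 0`.
-/

theorem tsum_mul_tsum_lt_tsum_mul_tsum_of_pairwise_nonneg {ι : Type*} {a b w : ι → ℝ}
    (ha : 0 ≤ a) (hb : 0 ≤ b) (hw : 0 ≤ w) (ha' : Summable a) (hb' : Summable b)
    (hwa : Summable fun i => w i * a i) (hwb : Summable fun i => w i * b i)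
    (hpair : ∀ i j, 0 ≤ (w i - w j) * (b i * a j - b j * a i))
    {i₀ j₀ : ι} (hpos : 0 < (w i₀ - w j₀) * (b i₀ * a j₀ - b j₀ * a i₀)) :
    (∑' i, w i * a i) * ∑' j, b j < (∑' i, w i * b i) * ∑' j, a j := by
  set P : ι × ι → ℝ := fun x => w x.1 * b x.1 * a x.2
  set Q : ι × ι → ℝ := fun x => w x.1 * a x.1 * b x.2
  have hP : Summable P := hwb.mul_of_nonneg ha' (fun i => mul_nonneg (hw i) (hb i)) ha
  have hQ : Summable Q := hwa.mul_of_nonneg hb' (fun i => mul_nonneg (hw i) (ha i)) hb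
  have hPs : Summable (P ∘ Prod.swap) := (Equiv.prodComm ι ι).summable_iff.2 hP
  have hQs : Summable (Q ∘ Prod.swap) := (Equiv.prodComm ι ι).summable_iff.2 hQ
  have hsymm : ∀ x, (P x - (Q ∘ Prod.swap) x) + ((P ∘ Prod.swap) x - Q x)
      = (w x.1 - w x.2) * (b x.1 * a x.2 - b x.2 * a x.1) := fun x => by
    simp only [P, Q, Function.comp_apply, Prod.fst_swap, Prod.snd_swap]; ring
  have hpos_sum : 0 < ∑' x, ((P x - (Q ∘ Prod.swap) x) + ((P ∘ Prod.swap) x - Q x)) := by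
    refine ((hP.sub hQs).add (hPs.sub hQ)).tsum_pos (fun x => ?_) (i₀, j₀) ?_ <;> rw [hsymm]
    exacts [hpair x.1 x.2, hpos]
  have hswap (F : ι × ι → ℝ) : ∑' x, (F ∘ Prod.swap) x = ∑' x, F x :=
    (Equiv.prodComm ι ι).tsum_eq F
  rw [(hP.sub hQs).tsum_add (hPs.sub hQ), hP.tsum_sub hQs, hPs.tsum_sub hQ, hswap, hswap]
    at hpos_sum
  rw [hwa.tsum_mul_tsum hb' hQ, hwb.tsum_mul_tsum ha' hP]
  linarith

theorem sub_mul_pow_mul_pow_sub_nonneg {x y : ℝ} (hx : 0 ≤ x) (hxy : x ≤ y) (i j : ℕ) :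
    0 ≤ ((i : ℝ) - j) * (y ^ i * x ^ j - y ^ j * x ^ i) := by
  wlog hji : j ≤ i generalizing i j
  · convert this j i (le_of_not_ge hji) using 1
    ring
  obtain ⟨d, rfl⟩ := Nat.exists_eq_add_of_le hji
  have hfactor : y ^ (j + d) * x ^ j - y ^ j * x ^ (j + d) = (y ^ j * x ^ j) * (y ^ d - x ^ d) := by
    ring
  rw [hfactor]
  exact mul_nonneg (by push_cast; linarith)
    (mul_nonneg (mul_nonneg (pow_nonneg (hx.trans hxy) j) (pow_nonneg hx j))
      (sub_nonneg.2 (pow_le_pow_left₀ hx hxy d)))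

section PowerSeries

variable {p : ℕ → ℝ} {ρ : ℝ}

theorem summable_mul_pow_of_le (hp : ∀ l, 0 ≤ p l) (hρ : Summable fun l => p l * ρ ^ l)
    {x : ℝ} (hx : 0 ≤ x) (hxρ : x ≤ ρ) : Summable fun l => p l * x ^ l :=
  hρ.of_nonneg_of_le (fun l => mul_nonneg (hp l) (pow_nonneg hx l))
    (fun l => mul_le_mul_of_nonneg_left (pow_le_pow_left₀ hx hxρ l) (hp l))

theorem summable_natCast_mul_mul_pow (hp : ∀ l, 0 ≤ p l) (hρ : Summable fun l => p l * ρ ^ l)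
    {r : ℝ} (hr : 0 ≤ r) (hrρ : r < ρ) : Summable fun l : ℕ => (l : ℝ) * (p l * r ^ l) := by
  have hρ0 : 0 < ρ := hr.trans_lt hrρ
  have hratio : ‖r / ρ‖ < 1 := by
    rw [Real.norm_of_nonneg (div_nonneg hr hρ0.le)]
    exact (div_lt_one hρ0).2 hrρ
  have hbound (l : ℕ) : p l * ρ ^ l ≤ ∑' m, p m * ρ ^ m :=
    hρ.le_tsum l fun m _ => mul_nonneg (hp m) (pow_nonneg hρ0.le m)
  refine Summable.of_nonneg_of_le (fun l => by have := hp l; positivity) (fun l => ?_)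
    ((summable_pow_mul_geometric_of_norm_lt_one 1 hratio).mul_left (∑' m, p m * ρ ^ m))
  calc (l : ℝ) * (p l * r ^ l) = (p l * ρ ^ l) * ((l : ℝ) ^ 1 * (r / ρ) ^ l) := by
        rw [div_pow]
        field_simp
    _ ≤ _ := mul_le_mul_of_nonneg_right (hbound l) (by positivity)

theorem hasDerivAt_tsum_mul_pow (hp : ∀ l, 0 ≤ p l) (hρ : Summable fun l => p l * ρ ^ l)
    {x : ℝ} (hx : |x| < ρ) :
    HasDerivAt (fun y => ∑' l, p l * y ^ l) (∑' l, p l * (l * x ^ (l - 1))) x := by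
  obtain ⟨r, hxr, hrρ⟩ := exists_between hx
  have hr : 0 < r := (abs_nonneg x).trans_lt hxr
  have hu : Summable fun l => p l * (l * r ^ (l - 1)) := by
    refine ((summable_natCast_mul_mul_pow hp hρ hr.le hrρ).div_const r).congr fun l => ?_
    rcases l with _ | l
    · simp
    · rw [Nat.add_sub_cancel, pow_succ]
      field_simp
  refine hasDerivAt_tsum_of_isPreconnected hu isOpen_Ioo isPreconnected_Ioo
    (fun l y _ => (hasDerivAt_pow l y).const_mul (p l)) (fun l y hy => ?_)
    ⟨neg_lt_zero.2 hr, hr⟩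
    (summable_mul_pow_of_le hp hρ le_rfl ((abs_nonneg x).trans hx.le)) (abs_lt.1 hxr)
  have hyr : |y| ≤ r := abs_le.2 ⟨hy.1.le, hy.2.le⟩
  rw [norm_mul, norm_mul, norm_pow, Real.norm_of_nonneg (hp l), Real.norm_natCast,
    Real.norm_eq_abs]
  have := hp l
  gcongr

theorem mul_deriv_tsum_mul_pow (hp : ∀ l, 0 ≤ p l) (hρ : Summable fun l => p l * ρ ^ l)
    {x : ℝ} (hx : |x| < ρ) :
    x * deriv (fun y => ∑' l, p l * y ^ l) x = ∑' l : ℕ, (l : ℝ) * (p l * x ^ l) := by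
  rw [(hasDerivAt_tsum_mul_pow hp hρ hx).deriv, ← tsum_mul_left]
  refine tsum_congr fun l => ?_
  rcases l with _ | l
  · simp
  · rw [Nat.add_sub_cancel, pow_succ]
    ring

theorem tsum_natCast_mul_mul_pow_pos (hp : ∀ l, 0 ≤ p l) (hρ : Summable fun l => p l * ρ ^ l)
    {k : ℕ} (hk : k ≠ 0) (hpk : 0 < p k) {x : ℝ} (hx : 0 < x) (hxρ : x < ρ) :
    0 < ∑' l : ℕ, (l : ℝ) * (p l * x ^ l) := by
  refine (summable_natCast_mul_mul_pow hp hρ hx.le hxρ).tsum_pos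
    (fun l => mul_nonneg l.cast_nonneg (mul_nonneg (hp l) (pow_nonneg hx.le l))) k ?_
  have : (0 : ℝ) < k := Nat.cast_pos.2 (Nat.pos_of_ne_zero hk)
  positivity

theorem tsum_natCast_mul_mul_pow_mul_tsum_lt (hp : ∀ l, 0 ≤ p l)
    (hρ : Summable fun l => p l * ρ ^ l) (h0 : 0 < p 0) {k : ℕ} (hk : k ≠ 0) (hpk : 0 < p k)
    {x y : ℝ} (hx : 0 ≤ x) (hxy : x < y) (hyρ : y < ρ) :
    (∑' l : ℕ, (l : ℝ) * (p l * x ^ l)) * ∑' l, p l * y ^ l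
      < (∑' l : ℕ, (l : ℝ) * (p l * y ^ l)) * ∑' l, p l * x ^ l := by
  have hy : 0 ≤ y := hx.trans hxy.le
  refine tsum_mul_tsum_lt_tsum_mul_tsum_of_pairwise_nonneg (w := fun l : ℕ => (l : ℝ))
    (fun l => mul_nonneg (hp l) (pow_nonneg hx l)) (fun l => mul_nonneg (hp l) (pow_nonneg hy l))
    (fun l => l.cast_nonneg) (summable_mul_pow_of_le hp hρ hx (hxy.trans hyρ).le)
    (summable_mul_pow_of_le hp hρ hy hyρ.le) (summable_natCast_mul_mul_pow hp hρ hx (hxy.trans hyρ))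
    (summable_natCast_mul_mul_pow hp hρ hy hyρ) (fun i j => ?_) (i₀ := k) (j₀ := 0) ?_
  · calc (0 : ℝ) ≤ p i * p j * (((i : ℝ) - j) * (y ^ i * x ^ j - y ^ j * x ^ i)) :=
          mul_nonneg (mul_nonneg (hp i) (hp j)) (sub_mul_pow_mul_pow_sub_nonneg hx hxy.le i j)
      _ = _ := by ring
  · have hk0 : (0 : ℝ) < k := Nat.cast_pos.2 (Nat.pos_of_ne_zero hk)
    have hpow := sub_pos.2 (pow_lt_pow_left₀ hxy hx hk)
    calc (0 : ℝ) < k * (p k * p 0) * (y ^ k - x ^ k) := by positivity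
      _ = _ := by simp only [Nat.cast_zero, pow_zero]; ring

end PowerSeries

theorem stmt10_general (p : ℕ → ℝ) (hp : ∀ l, 0 ≤ p l) (h0 : 0 < p 0)
    (hbig : ∃ l, 2 ≤ l ∧ 0 < p l)
    (f : ℝ → ℝ) (hf : ∀ s, f s = ∑' l, p l * s ^ l)
    (s₁ s₂ : ℝ) (h1 : 0 < s₁) (h12 : s₁ < s₂)
    (hrad : ∃ ρ, s₂ < ρ ∧ Summable (fun l => p l * ρ ^ l)) :
    f s₂ / (s₂ * deriv f s₂) < f s₁ / (s₁ * deriv f s₁) := by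
  obtain ⟨k, hk, hpk⟩ := hbig
  obtain ⟨ρ, hs₂ρ, hρ⟩ := hrad
  have hk0 : k ≠ 0 := by omega
  have h2 : 0 < s₂ := h1.trans h12
  have hs₁ρ : s₁ < ρ := h12.trans hs₂ρ
  have hmoment (s : ℝ) (hs : 0 < s) (hsρ : s < ρ) :
      s * deriv f s = ∑' l : ℕ, (l : ℝ) * (p l * s ^ l) :=
    funext hf ▸ mul_deriv_tsum_mul_pow hp hρ (by rwa [abs_of_pos hs])
  rw [div_lt_div_iff₀, hmoment s₁ h1 hs₁ρ, hmoment s₂ h2 hs₂ρ, hf, hf]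
  · linarith [tsum_natCast_mul_mul_pow_mul_tsum_lt hp hρ h0 hk0 hpk h1.le h12 hs₂ρ]
  · exact hmoment s₂ h2 hs₂ρ ▸ tsum_natCast_mul_mul_pow_pos hp hρ hk0 hpk h2 hs₂ρ
  · exact hmoment s₁ h1 hs₁ρ ▸ tsum_natCast_mul_mul_pow_pos hp hρ hk0 hpk h1 hs₁ρ

theorem stmt10 (L : Set ℕ) (p : ℕ → ℝ) (hp : ∀ l, 0 ≤ p l)
    (hsupp : ∀ l ∉ L, p l = 0) (hsum : ∑' l, p l = 1) (h0 : 0 < p 0)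
    (hbig : ∃ l, 2 ≤ l ∧ 0 < p l)
    (f : ℝ → ℝ) (hf : ∀ s, f s = ∑' l, p l * s ^ l)
    (s₁ s₂ : ℝ) (h1 : 0 < s₁) (h12 : s₁ < s₂)
    (hrad : ∃ ρ, s₂ < ρ ∧ Summable (fun l => p l * ρ ^ l))
    (hd1 : 0 < deriv f s₁) (hd2 : 0 < deriv f s₂) :
    f s₂ / (s₂ * deriv f s₂) < f s₁ / (s₁ * deriv f s₁) :=
  stmt10_general p hp h0 hbig f hf s₁ s₂ h1 h12 hrad
end
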